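/- arXiv:1804.08005 — 2 statements merged into one kernel-verified Lean document; each statement's English description precedes it below -/
import Mathlib

section
/- (Lemma 1(iii), D(Γ) ⊂ ∩ conv(C(Γ,i))) If μ ∈ Δ(A) arises as η(ψ,σ) for some signal system (B_i), mediator distribution ψ ∈ Δ(B) and mediated CPT Nash equilibrium σ, then for every player i and every a_i with μ_i(a_i) > 0, the conditional μ_{-i}(·|a_i) is a convex combination (with coefficients ψ_i(b_i)σ_i(b_i)(a_i)/μ_i(a_i) over signals b_i) of the conditionals μ̃_{-i}(·|b_i), each of which lies in C(Γ,i,a_i). -/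
open Finset

section

variable {ι : Type*} [Fintype ι] [DecidableEq ι]

/-- Combine an action `ai` of player `i` with an action profile `a` of the remaining
players into a full action profile. -/
def glue (A : ι → Type*) (i : ι) (ai : A i)
    (a : ∀ j : {j : ι // j ≠ i}, A j.1) (j : ι) : A j :=
  if h : j = i then cast (congrArg A h).symm ai else a ⟨j, h⟩

variable (A : ι → Type*) [∀ j, Fintype (A j)] [∀ j, DecidableEq (A j)]

/-- Marginal probability `μ_i(a_i)` of a joint distribution `μ` on action profiles. -/
noncomputable def marg (μ : (∀ j, A j) → ℝ) (i : ι) (ai : A i) : ℝ :=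
  ∑ a : ∀ j : {j : ι // j ≠ i}, A j.1, μ (glue A i ai a)

/-- Conditional distribution `μ_{-i}(·|a_i)` on opponents' action profiles
(by convention `0` when the marginal vanishes, since division by zero yields `0`). -/
noncomputable def condDist (μ : (∀ j, A j) → ℝ) (i : ι) (ai : A i) :
    (∀ j : {j : ι // j ≠ i}, A j.1) → ℝ :=
  fun a => μ (glue A i ai a) / marg A μ i ai

variable (x : ∀ i, (∀ j, A j) → ℝ)
variable (V : ∀ i, ((∀ j : {j : ι // j ≠ i}, A j.1) → ℝ) →
  ((∀ j : {j : ι // j ≠ i}, A j.1) → ℝ) → ℝ)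

/-- The outcome profile of the lottery faced by player `i` when she plays `ai`:
her payoff as a function of the opponents' action profile. -/
def outcome (i : ι) (ai : A i) : (∀ j : {j : ι // j ≠ i}, A j.1) → ℝ :=
  fun a => x i (glue A i ai a)

/-- `C(Γ, i, a_i)` : distributions `π` on opponents' profiles for which `a_i` is a
CPT best response of player `i`, i.e. `V_i(L_i(π, a_i)) ≥ V_i(L_i(π, ã_i))` for all `ã_i`. -/
def CEia (i : ι) (ai : A i) : Set ((∀ j : {j : ι // j ≠ i}, A j.1) → ℝ) :=
  {π | π ∈ stdSimplex ℝ (∀ j : {j : ι // j ≠ i}, A j.1) ∧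
    ∀ bi : A i, V i π (outcome A x i bi) ≤ V i π (outcome A x i ai)}

/-- `C(Γ, i)` : joint distributions all of whose conditionals given a supported action
`a_i` of player `i` lie in `C(Γ, i, a_i)`. -/
noncomputable def CEi (i : ι) : Set ((∀ j, A j) → ℝ) :=
  {μ | μ ∈ stdSimplex ℝ (∀ j, A j) ∧
    ∀ ai : A i, 0 < marg A μ i ai → condDist A μ i ai ∈ CEia A x V i ai}

/-- `C(Γ)` : the set of CPT correlated equilibria of the game. -/
noncomputable def CE : Set ((∀ j, A j) → ℝ) :=
  {μ | μ ∈ stdSimplex ℝ (∀ j, A j) ∧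
    ∀ i, ∀ ai : A i, 0 < marg A μ i ai → ∀ bi : A i,
      V i (condDist A μ i ai) (outcome A x i bi) ≤ V i (condDist A μ i ai) (outcome A x i ai)}

variable (B : ι → Type*) [∀ j, Fintype (B j)] [∀ j, DecidableEq (B j)]

/-- The assessment `μ̃_{-i}(·|b_i)` of player `i` upon receiving signal `b_i`:
`μ̃_{-i}(a_{-i}|b_i) = Σ_{b_{-i}} ψ_{-i}(b_{-i}|b_i) Π_{j ≠ i} σ_j(b_j)(a_j)`. -/
noncomputable def assess (ψ : (∀ j, B j) → ℝ) (σ : ∀ i, B i → A i → ℝ)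
    (i : ι) (bi : B i) : (∀ j : {j : ι // j ≠ i}, A j.1) → ℝ :=
  fun a => ∑ bm : ∀ j : {j : ι // j ≠ i}, B j.1,
    condDist B ψ i bi bm * ∏ j : {j : ι // j ≠ i}, σ j.1 (bm j) (a j)

/-- `η(ψ, σ)` : the joint distribution on action profiles induced by the mediator
distribution `ψ` and the randomized strategy profile `σ`. -/
noncomputable def eta (ψ : (∀ j, B j) → ℝ) (σ : ∀ i, B i → A i → ℝ) :
    (∀ j, A j) → ℝ :=
  fun a => ∑ b : ∀ j, B j, ψ b * ∏ i, σ i (b i) (a i)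

/-- `σ` is a mediated CPT Nash equilibrium with respect to the mediator distribution `ψ`:
for every player `i` and every signal `b_i` (received with positive probability), the
support of `σ_i(b_i)` consists of CPT best responses to the assessment `μ̃_{-i}(·|b_i)`. -/
noncomputable def MediatedNash (ψ : (∀ j, B j) → ℝ) (σ : ∀ i, B i → A i → ℝ) : Prop :=
  ∀ (i : ι) (bi : B i), 0 < marg B ψ i bi → ∀ ai : A i, 0 < σ i bi ai →
    assess A B ψ σ i bi ∈ CEia A x V i ai

lemma glue_apply_self (i : ι) (ai : A i) (a : ∀ j : {j : ι // j ≠ i}, A j.1) :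
    glue A i ai a i = ai := by
  simp [glue]

lemma glue_apply_ne (i : ι) (ai : A i) (a : ∀ j : {j : ι // j ≠ i}, A j.1)
    (j : {j : ι // j ≠ i}) : glue A i ai a j.1 = a j := by
  simp only [glue, dif_neg j.2]

lemma glue_eq_piSplitAt_symm (i : ι) (ai : A i) (a : ∀ j : {j : ι // j ≠ i}, A j.1) :
    glue A i ai a = (Equiv.piSplitAt i A).symm (ai, a) := by
  funext j
  simp only [glue, Equiv.piSplitAt_symm_apply]
  split_ifs with h
  · subst h; rfl
  · rfl

lemma sum_glue (i : ι) (f : (∀ j, A j) → ℝ) :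
    ∑ b : ∀ j, A j, f b
      = ∑ ai : A i, ∑ a : ∀ j : {j : ι // j ≠ i}, A j.1, f (glue A i ai a) := by
  rw [← Equiv.sum_comp (Equiv.piSplitAt i A).symm f, Fintype.sum_prod_type]
  simp only [glue_eq_piSplitAt_symm]

lemma prod_glue (i : ι) (f : ι → ℝ) :
    ∏ j, f j = f i * ∏ j : {j : ι // j ≠ i}, f j.1 := by
  rw [Fintype.prod_eq_mul_prod_compl i]
  congr 1
  exact Finset.prod_subtype _ (by simp) _

lemma marg_mul_assess (ψ : (∀ j, B j) → ℝ) (hψ : ψ ∈ stdSimplex ℝ (∀ j, B j))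
    (σ : ∀ i, B i → A i → ℝ) (i : ι) (bi : B i)
    (a : ∀ j : {j : ι // j ≠ i}, A j.1) :
    marg B ψ i bi * assess A B ψ σ i bi a
      = ∑ bm : ∀ j : {j : ι // j ≠ i}, B j.1,
          ψ (glue B i bi bm) * ∏ j : {j : ι // j ≠ i}, σ j.1 (bm j) (a j) := by
  unfold assess condDist
  rw [Finset.mul_sum]
  rcases (Finset.sum_nonneg fun bm _ => hψ.1 (glue B i bi bm) :
      (0:ℝ) ≤ marg B ψ i bi).lt_or_eq with h | h
  · have h0 : marg B ψ i bi ≠ 0 := ne_of_gt h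
    refine Finset.sum_congr rfl fun bm _ => ?_
    field_simp
  · have hz : ∀ bm, ψ (glue B i bi bm) = 0 := by
      intro bm
      have := (Finset.sum_eq_zero_iff_of_nonneg
        (fun bm _ => hψ.1 (glue B i bi bm))).mp h.symm
      exact this bm (Finset.mem_univ _)
    refine Finset.sum_congr rfl fun bm _ => ?_
    rw [hz bm]
    simp

lemma eta_glue (ψ : (∀ j, B j) → ℝ) (σ : ∀ i, B i → A i → ℝ) (i : ι) (ai : A i)
    (a : ∀ j : {j : ι // j ≠ i}, A j.1) :
    eta A B ψ σ (glue A i ai a)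
      = ∑ bi : B i, σ i bi ai *
          ∑ bm : ∀ j : {j : ι // j ≠ i}, B j.1,
            ψ (glue B i bi bm) * ∏ j : {j : ι // j ≠ i}, σ j.1 (bm j) (a j) := by
  unfold eta
  rw [sum_glue B i]
  refine Finset.sum_congr rfl fun bi _ => ?_
  rw [Finset.mul_sum]
  refine Finset.sum_congr rfl fun bm _ => ?_
  rw [prod_glue i, glue_apply_self B, glue_apply_self A]
  simp only [glue_apply_ne]
  ring

lemma marg_eta (ψ : (∀ j, B j) → ℝ) (σ : ∀ i, B i → A i → ℝ)
    (hσ : ∀ (i : ι) (bi : B i), σ i bi ∈ stdSimplex ℝ (A i)) (i : ι) (ai : A i) :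
    marg A (eta A B ψ σ) i ai = ∑ bi : B i, marg B ψ i bi * σ i bi ai := by
  have hm : marg A (eta A B ψ σ) i ai
      = ∑ a : ∀ j : {j : ι // j ≠ i}, A j.1, eta A B ψ σ (glue A i ai a) := rfl
  rw [hm]
  simp only [eta_glue A B ψ σ i ai]
  rw [Finset.sum_comm]
  refine Finset.sum_congr rfl fun bi _ => ?_
  rw [← Finset.mul_sum, mul_comm]
  congr 1
  rw [Finset.sum_comm]
  have hmb : marg B ψ i bi
      = ∑ bm : ∀ j : {j : ι // j ≠ i}, B j.1, ψ (glue B i bi bm) := rfl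
  rw [hmb]
  refine Finset.sum_congr rfl fun bm _ => ?_
  rw [← Finset.mul_sum]
  have hs : ∑ a : ∀ j : {j : ι // j ≠ i}, A j.1,
      ∏ j : {j : ι // j ≠ i}, σ j.1 (bm j) (a j) = 1 := by
    rw [← Fintype.prod_sum]
    exact Finset.prod_eq_one fun j _ => (hσ j.1 (bm j)).2
  rw [hs, mul_one]

/-- Lemma 1(iii), `D(Γ) ⊆ ⋂ conv C(Γ,i)`: if `μ = η(ψ,σ)` for a
mediator distribution `ψ` and a mediated CPT Nash equilibrium `σ`, then for every
player `i` and action `a_i` with `μ_i(a_i) > 0`, the conditional `μ_{-i}(·|a_i)` is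
the convex combination with weights `ψ_i(b_i)σ_i(b_i)(a_i)/μ_i(a_i)` of the assessments
`μ̃_{-i}(·|b_i)` (each of which lies in `C(Γ,i,a_i)` when relevant); in particular it
lies in the convex hull of `C(Γ, i, a_i)`. -/
theorem eta_cond_mem_convexHull_CEia
    (ψ : (∀ j, B j) → ℝ) (hψ : ψ ∈ stdSimplex ℝ (∀ j, B j))
    (σ : ∀ i, B i → A i → ℝ) (hσ : ∀ (i : ι) (bi : B i), σ i bi ∈ stdSimplex ℝ (A i))
    (hNash : MediatedNash A x V B ψ σ) :
    ∀ (i : ι) (ai : A i), 0 < marg A (eta A B ψ σ) i ai →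
      (condDist A (eta A B ψ σ) i ai = fun a =>
        ∑ bi : B i, (marg B ψ i bi * σ i bi ai / marg A (eta A B ψ σ) i ai) *
          assess A B ψ σ i bi a) ∧
      condDist A (eta A B ψ σ) i ai ∈ convexHull ℝ (CEia A x V i ai) := by
  intro i ai hM
  have hMeq : marg A (eta A B ψ σ) i ai = ∑ bi : B i, marg B ψ i bi * σ i bi ai :=
    marg_eta A B ψ σ hσ i ai
  have hmb : ∀ bi : B i, 0 ≤ marg B ψ i bi := fun bi =>
    Finset.sum_nonneg fun bm _ => hψ.1 (glue B i bi bm)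
  have hσ0 : ∀ bi : B i, 0 ≤ σ i bi ai := fun bi => (hσ i bi).1 ai
  have h1 : condDist A (eta A B ψ σ) i ai = fun a =>
      ∑ bi : B i, (marg B ψ i bi * σ i bi ai / marg A (eta A B ψ σ) i ai) *
        assess A B ψ σ i bi a := by
    funext a
    show eta A B ψ σ (glue A i ai a) / marg A (eta A B ψ σ) i ai = _
    rw [eta_glue A B ψ σ i ai a, Finset.sum_div]
    refine Finset.sum_congr rfl fun bi _ => ?_
    rw [← marg_mul_assess A B ψ hψ σ i bi a]
    ring
  refine ⟨h1, ?_⟩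
  set t : Finset (B i) := Finset.univ.filter fun bi => 0 < marg B ψ i bi * σ i bi ai
    with ht
  have hw0 : ∀ bi : B i,
      0 ≤ marg B ψ i bi * σ i bi ai / marg A (eta A B ψ σ) i ai := fun bi =>
    div_nonneg (mul_nonneg (hmb bi) (hσ0 bi)) hM.le
  have hwzero : ∀ bi ∉ t,
      marg B ψ i bi * σ i bi ai / marg A (eta A B ψ σ) i ai = 0 := by
    intro bi hbi
    simp only [ht, Finset.mem_filter, Finset.mem_univ, true_and, not_lt] at hbi
    have hz : marg B ψ i bi * σ i bi ai = 0 :=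
      le_antisymm hbi (mul_nonneg (hmb bi) (hσ0 bi))
    rw [hz, zero_div]
  have hwsum : ∑ bi ∈ t,
      marg B ψ i bi * σ i bi ai / marg A (eta A B ψ σ) i ai = 1 := by
    rw [Finset.sum_subset (Finset.subset_univ t) fun bi _ hbi => hwzero bi hbi]
    rw [← Finset.sum_div, ← hMeq, div_self (ne_of_gt hM)]
  have hcm : condDist A (eta A B ψ σ) i ai
      = t.centerMass (fun bi => marg B ψ i bi * σ i bi ai / marg A (eta A B ψ σ) i ai)
          (fun bi => assess A B ψ σ i bi) := by
    rw [Finset.centerMass_eq_of_sum_1 _ _ hwsum, h1]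
    funext a
    rw [Finset.sum_apply]
    simp only [Pi.smul_apply, smul_eq_mul]
    exact (Finset.sum_subset (Finset.subset_univ t)
      (fun bi _ hbi => by rw [hwzero bi hbi, zero_mul])).symm
  rw [hcm]
  refine Finset.centerMass_mem_convexHull t (fun bi _ => hw0 bi)
    (by rw [hwsum]; exact one_pos) ?_
  intro bi hbi
  simp only [ht, Finset.mem_filter, Finset.mem_univ, true_and] at hbi
  have hmbpos : 0 < marg B ψ i bi := by
    rcases (hmb bi).lt_or_eq with h | h
    · exact h
    · exact absurd hbi (by rw [← h, zero_mul]; exact lt_irrefl 0)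
  have hσpos : 0 < σ i bi ai := by
    rcases (hσ0 bi).lt_or_eq with h | h
    · exact h
    · exact absurd hbi (by rw [← h, mul_zero]; exact lt_irrefl 0)
  exact hNash i bi hmbpos ai hσpos

end
end

section
/- (Proposition 4 / characterization of no-regret play) Let (a^t)_{t≥1} be a sequence of action profiles in a finite game Γ, ξ^t the empirical distribution of play up to time t, and K_i^t(a_i, ã_i) = ξ_i^t(a_i) · [V_i({(ξ_{-i}^t(a_{-i}|a_i), x_i(ã_i,a_{-i}))}) − V_i({(ξ_{-i}^t(a_{-i}|a_i), x_i(a_i,a_{-i}))})] the CPT regret. Then limsup_{t→∞} K_i^t(a_i,ã_i) ≤ 0 for every player i and every pair a_i ≠ ã_i if and only if ξ^t converges to the set C(Γ) of CPT correlated equilibria (i.e., d(ξ^t, C(Γ)) → 0). -/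
/-!
On the simplex `Δ` of joint distributions, each regret `K_i(a_i, ã_i)` is a continuous function
of the distribution: away from `ξ_i(a_i) = 0` because the conditional is, and near it because the
regret is `O(ξ_i(a_i))`. Moreover `C(Γ)` is exactly the set of points of `Δ` at which all regrets
are nonpositive, hence closed. As `Δ` is compact and contains every `ξ^t` (`t ≥ 1`), both sides of
the equivalence are statements about the cluster points of `(ξ^t)`: the limsup of a function
continuous on `Δ` along `ξ^t` is `≤ 0` iff the function is `≤ 0` at every cluster point, and
`d(ξ^t, C(Γ)) → 0` iff every cluster point lies in `C(Γ)`.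
-/

open Finset

section

variable {ι : Type*} [Fintype ι] [DecidableEq ι]

variable (A : ι → Type*) [∀ j, Fintype (A j)] [∀ j, DecidableEq (A j)]

variable (x : ∀ i, (∀ j, A j) → ℝ)
variable (V : ∀ i, ((∀ j : {j : ι // j ≠ i}, A j.1) → ℝ) →
  ((∀ j : {j : ι // j ≠ i}, A j.1) → ℝ) → ℝ)

/-- The empirical distribution of the action play `aseq` up to step `t`. -/
noncomputable def emp (aseq : ℕ → (∀ j, A j)) (t : ℕ) : (∀ j, A j) → ℝ :=
  fun s => (∑ τ ∈ Finset.range t, if aseq τ = s then (1 : ℝ) else 0) / (t : ℝ)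

/-- The CPT regret `K_i^t(a_i, ã_i)` of player `i` at step `t` for having played
`a_i` instead of `ã_i`. -/
noncomputable def cptRegret (aseq : ℕ → (∀ j, A j)) (i : ι) (t : ℕ) (ai ati : A i) : ℝ :=
  marg A (emp A aseq t) i ai *
    (V i (condDist A (emp A aseq t) i ai) (outcome A x i ati) -
     V i (condDist A (emp A aseq t) i ai) (outcome A x i ai))

open Filter Topology

section ClusterPoints

variable {α X : Type*} [TopologicalSpace X] {l : Filter α} {u : α → X} {K : Set X}

theorem MapClusterPt.continuousWithinAt_comp {Y : Type*} [TopologicalSpace Y] {f : X → Y}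
    {p : X} (hp : MapClusterPt p l u) (hf : ContinuousWithinAt f K p)
    (hu : ∀ᶠ t in l, u t ∈ K) : MapClusterPt (f p) l (f ∘ u) :=
  hp.tendsto_comp' (hf.mono_left (inf_le_inf_left _ (tendsto_principal.2 hu)))

variable {f : X → ℝ}

theorem IsCompact.isBoundedUnder_le_comp (hK : IsCompact K) (hf : ContinuousOn f K)
    (hu : ∀ᶠ t in l, u t ∈ K) : IsBoundedUnder (· ≤ ·) l (f ∘ u) :=
  let ⟨_, hC⟩ := hK.bddAbove_image hf
  isBoundedUnder_of_eventually_le (hu.mono fun _ ht => hC (Set.mem_image_of_mem f ht))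

theorem IsCompact.isBoundedUnder_ge_comp (hK : IsCompact K) (hf : ContinuousOn f K)
    (hu : ∀ᶠ t in l, u t ∈ K) : IsBoundedUnder (· ≥ ·) l (f ∘ u) :=
  let ⟨_, hC⟩ := hK.bddBelow_image hf
  isBoundedUnder_of_eventually_ge (hu.mono fun _ ht => hC (Set.mem_image_of_mem f ht))

theorem IsCompact.limsup_comp_le_iff [NeBot l] (hK : IsCompact K) (hf : ContinuousOn f K)
    (hu : ∀ᶠ t in l, u t ∈ K) {c : ℝ} :
    limsup (f ∘ u) l ≤ c ↔ ∀ p ∈ K, MapClusterPt p l u → f p ≤ c := by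
  constructor
  · intro hc p hpK hp
    exact ((hp.continuousWithinAt_comp (hf p hpK) hu).le_limsup
      (hK.isBoundedUnder_le_comp hf hu)).trans hc
  · intro hc
    by_contra! hlt
    obtain ⟨b, hcb, hb⟩ := exists_between hlt
    have hfreq : ∃ᶠ t in l, b < f (u t) :=
      frequently_lt_of_lt_limsup (hK.isBoundedUnder_ge_comp hf hu).isCoboundedUnder_le hb
    -- a cluster point of `u` along the times where `f ∘ u` exceeds `b`
    set l' := l ⊓ 𝓟 {t | b < f (u t)}
    have : NeBot l' := frequently_iff_neBot.1 hfreq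
    have hu' : ∀ᶠ t in l', u t ∈ K := hu.filter_mono inf_le_left
    have hbl' : ∀ᶠ t in l', (f ∘ u) t ∈ Set.Ici b :=
      eventually_inf_principal.2 (Eventually.of_forall fun _ (ht : b < f (u _)) => ht.le)
    obtain ⟨p, hpK, hp⟩ := hK.exists_mapClusterPt (tendsto_principal.2 hu')
    have hbp : b ≤ f p :=
      isClosed_Ici.mem_of_mapClusterPt (hp.continuousWithinAt_comp (hf p hpK) hu') hbl'
    exact (hcb.trans_le hbp).not_ge (hc p hpK (hp.mono inf_le_left))

end ClusterPoints

theorem IsCompact.tendsto_infDist_zero_iff {α M : Type*} [PseudoMetricSpace M] {l : Filter α}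
    [NeBot l] {u : α → M} {K S : Set M} (hK : IsCompact K) (hS : IsClosed S) (hSne : S.Nonempty)
    (hu : ∀ᶠ t in l, u t ∈ K) :
    Tendsto (fun t => Metric.infDist (u t) S) l (𝓝 0) ↔
      ∀ p ∈ K, MapClusterPt p l u → p ∈ S := by
  have hd : ContinuousOn (Metric.infDist · S) K := (Metric.continuous_infDist_pt S).continuousOn
  have hlimsup := hK.limsup_comp_le_iff hd hu (c := 0)
  simp only [hS.mem_iff_infDist_zero hSne, ← Metric.infDist_nonneg.ge_iff_eq'] at hlimsup ⊢
  rw [← hlimsup]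
  refine ⟨fun h => h.limsup_eq.le, fun h => tendsto_of_le_liminf_of_limsup_le ?_ h
    (hK.isBoundedUnder_le_comp hd hu) (hK.isBoundedUnder_ge_comp hd hu)⟩
  exact le_liminf_of_le (hK.isBoundedUnder_le_comp hd hu).isCoboundedUnder_ge
    (Eventually.of_forall fun _ => Metric.infDist_nonneg)

noncomputable def cptRegretOfDist (i : ι) (ai bi : A i) (μ : (∀ j, A j) → ℝ) : ℝ :=
  marg A μ i ai *
    (V i (condDist A μ i ai) (outcome A x i bi) - V i (condDist A μ i ai) (outcome A x i ai))

theorem continuous_marg (i : ι) (ai : A i) :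
    Continuous fun μ : (∀ j, A j) → ℝ => marg A μ i ai :=
  continuous_finsetSum _ fun _ _ => continuous_apply _

theorem marg_nonneg {μ : (∀ j, A j) → ℝ} (hμ : μ ∈ stdSimplex ℝ (∀ j, A j)) (i : ι)
    (ai : A i) : 0 ≤ marg A μ i ai :=
  Finset.sum_nonneg fun _ _ => hμ.1 _

theorem condDist_mem_stdSimplex {μ : (∀ j, A j) → ℝ} (hμ : μ ∈ stdSimplex ℝ (∀ j, A j))
    {i : ι} {ai : A i} (h : 0 < marg A μ i ai) :
    condDist A μ i ai ∈ stdSimplex ℝ (∀ j : {j : ι // j ≠ i}, A j.1) :=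
  ⟨fun _ => div_nonneg (hμ.1 _) h.le, by
    simp only [condDist, ← Finset.sum_div]
    exact div_self h.ne'⟩

theorem continuousAt_condDist {i : ι} {ai : A i} {μ : (∀ j, A j) → ℝ}
    (h : marg A μ i ai ≠ 0) : ContinuousAt (fun ν => condDist A ν i ai) μ :=
  continuousAt_pi.2 fun _ =>
    (continuous_apply _).continuousAt.div (continuous_marg A i ai).continuousAt h

theorem emp_mem_stdSimplex (aseq : ℕ → (∀ j, A j)) {t : ℕ} (ht : t ≠ 0) :
    emp A aseq t ∈ stdSimplex ℝ (∀ j, A j) := by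
  refine ⟨fun _ => div_nonneg (Finset.sum_nonneg fun _ _ => by positivity) t.cast_nonneg, ?_⟩
  simp only [emp, ← Finset.sum_div]
  rw [Finset.sum_comm]
  simp [ht]

section Regret

variable {A x V}

theorem cptRegretOfDist_nonpos_iff {μ : (∀ j, A j) → ℝ} (hμ : μ ∈ stdSimplex ℝ (∀ j, A j))
    {i : ι} {ai : A i} :
    (∀ bi, cptRegretOfDist A x V i ai bi μ ≤ 0) ↔
      (0 < marg A μ i ai → ∀ bi, V i (condDist A μ i ai) (outcome A x i bi) ≤
        V i (condDist A μ i ai) (outcome A x i ai)) := by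
  rcases (marg_nonneg A hμ i ai).eq_or_lt with h | h
  · simp [cptRegretOfDist, ← h]
  · simp [cptRegretOfDist, h, h.le, mul_nonpos_iff_pos_imp_nonpos]

theorem mem_CE_iff {μ : (∀ j, A j) → ℝ} :
    μ ∈ CE A x V ↔ μ ∈ stdSimplex ℝ (∀ j, A j) ∧
      ∀ i (ai bi : A i), ai ≠ bi → cptRegretOfDist A x V i ai bi μ ≤ 0 := by
  refine ⟨fun h => ⟨h.1, fun i ai bi _ => (cptRegretOfDist_nonpos_iff h.1).2 (h.2 i ai) bi⟩,
    fun h => ⟨h.1, fun i ai => (cptRegretOfDist_nonpos_iff h.1).1 fun bi => ?_⟩⟩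
  rcases eq_or_ne ai bi with rfl | hab
  · simp [cptRegretOfDist]
  · exact h.2 i ai bi hab

theorem continuousAt_cptRegretOfDist
    (hV : ∀ (i : ι) (z : (∀ j : {j : ι // j ≠ i}, A j.1) → ℝ), Continuous (fun π => V i π z))
    {i : ι} {ai : A i} (bi : A i) {μ : (∀ j, A j) → ℝ} (h : marg A μ i ai ≠ 0) :
    ContinuousAt (cptRegretOfDist A x V i ai bi) μ :=
  (continuous_marg A i ai).continuousAt.mul
    (((hV i _).continuousAt.comp (continuousAt_condDist A h)).sub
      ((hV i _).continuousAt.comp (continuousAt_condDist A h)))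

theorem exists_abs_cptRegretOfDist_le_mul_marg
    (hV : ∀ (i : ι) (z : (∀ j : {j : ι // j ≠ i}, A j.1) → ℝ), Continuous (fun π => V i π z))
    (i : ι) (ai bi : A i) : ∃ C, ∀ μ ∈ stdSimplex ℝ (∀ j, A j),
      |cptRegretOfDist A x V i ai bi μ| ≤ marg A μ i ai * C := by
  have hΔ := isCompact_stdSimplex ℝ (∀ j : {j : ι // j ≠ i}, A j.1)
  obtain ⟨C₁, hC₁⟩ := hΔ.exists_bound_of_continuousOn (hV i (outcome A x i bi)).continuousOn
  obtain ⟨C₂, hC₂⟩ := hΔ.exists_bound_of_continuousOn (hV i (outcome A x i ai)).continuousOn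
  refine ⟨C₁ + C₂, fun μ hμ => ?_⟩
  rcases (marg_nonneg A hμ i ai).eq_or_lt with h | h
  · simp [cptRegretOfDist, ← h]
  · have hπ := condDist_mem_stdSimplex A hμ h
    rw [cptRegretOfDist, abs_mul, abs_of_pos h]
    exact mul_le_mul_of_nonneg_left ((abs_sub _ _).trans (add_le_add (hC₁ _ hπ) (hC₂ _ hπ))) h.le

theorem continuousOn_cptRegretOfDist
    (hV : ∀ (i : ι) (z : (∀ j : {j : ι // j ≠ i}, A j.1) → ℝ), Continuous (fun π => V i π z))
    (i : ι) (ai bi : A i) :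
    ContinuousOn (cptRegretOfDist A x V i ai bi) (stdSimplex ℝ (∀ j, A j)) := by
  intro μ hμ
  rcases (marg_nonneg A hμ i ai).eq_or_lt with h | h
  · -- where the marginal vanishes, so does the regret, and nearby it is `O(marginal)`
    obtain ⟨C, hC⟩ := exists_abs_cptRegretOfDist_le_mul_marg hV i ai bi
    have hmarg : Tendsto (fun ν => marg A ν i ai * C) (𝓝[stdSimplex ℝ _] μ) (𝓝 0) := by
      simpa [← h] using (((continuous_marg A i ai).tendsto μ).mul_const C).mono_left
        nhdsWithin_le_nhds
    have hzero : cptRegretOfDist A x V i ai bi μ = 0 := by simp [cptRegretOfDist, ← h]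
    rw [ContinuousWithinAt, hzero]
    exact squeeze_zero_norm' (eventually_nhdsWithin_of_forall hC) hmarg
  · exact (continuousAt_cptRegretOfDist hV bi h.ne').continuousWithinAt

theorem isClosed_CE
    (hV : ∀ (i : ι) (z : (∀ j : {j : ι // j ≠ i}, A j.1) → ℝ), Continuous (fun π => V i π z)) :
    IsClosed (CE A x V) := by
  have hCE : CE A x V = stdSimplex ℝ (∀ j, A j) ∩ ⋂ (i) (ai) (bi) (_ : ai ≠ bi),
      stdSimplex ℝ (∀ j, A j) ∩ cptRegretOfDist A x V i ai bi ⁻¹' Set.Iic 0 := by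
    ext μ
    simp +contextual [mem_CE_iff]
  rw [hCE]
  exact (isClosed_stdSimplex ℝ _).inter <| isClosed_iInter fun i => isClosed_iInter fun ai =>
    isClosed_iInter fun bi => isClosed_iInter fun _ =>
      (continuousOn_cptRegretOfDist hV i ai bi).preimage_isClosed_of_isClosed
        (isClosed_stdSimplex ℝ _) isClosed_Iic

end Regret

/-- Proposition 4: all CPT regrets have nonpositive limsup if and only if
the empirical distribution of play converges to the set `C(Γ)` of CPT correlated
equilibria. -/
theorem limsup_regret_nonpos_iff_emp_tendsto_CE
    (hV : ∀ (i : ι) (z : (∀ j : {j : ι // j ≠ i}, A j.1) → ℝ),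
      Continuous (fun π => V i π z))
    (hne : (CE A x V).Nonempty)
    (aseq : ℕ → (∀ j, A j)) :
    (∀ (i : ι) (ai ati : A i), ai ≠ ati →
      Filter.limsup (fun t => cptRegret A x V aseq i t ai ati) Filter.atTop ≤ 0) ↔
    Filter.Tendsto (fun t => Metric.infDist (emp A aseq t) (CE A x V))
      Filter.atTop (nhds 0) := by
  have hΔ := isCompact_stdSimplex ℝ (∀ j, A j)
  have hemp : ∀ᶠ t in atTop, emp A aseq t ∈ stdSimplex ℝ (∀ j, A j) :=
    (eventually_ne_atTop 0).mono fun _ => emp_mem_stdSimplex A aseq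
  have hregret : ∀ i (ai bi : A i),
      limsup (fun t => cptRegret A x V aseq i t ai bi) atTop ≤ 0 ↔
        ∀ μ ∈ stdSimplex ℝ (∀ j, A j), MapClusterPt μ atTop (emp A aseq) →
          cptRegretOfDist A x V i ai bi μ ≤ 0 :=
    fun i ai bi => hΔ.limsup_comp_le_iff (continuousOn_cptRegretOfDist hV i ai bi) hemp
  simp only [hregret, hΔ.tendsto_infDist_zero_iff (isClosed_CE hV) hne hemp, mem_CE_iff]
  exact ⟨fun h μ hμ hclus => ⟨hμ, fun i ai bi hab => h i ai bi hab μ hμ hclus⟩,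
    fun h i ai bi hab μ hμ hclus => (h μ hμ hclus).2 i ai bi hab⟩

end
end
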